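/- arXiv:2408.05663 — 2 statements merged into one kernel-verified Lean document; each statement's English description precedes it below -/
import Mathlib

section
/- Let V be a skew-adjoint operator on a complex Hilbert space and z > 0. If ζ is an eigenvector of the bounded operator Q_z = R_z* V R_z (where R_z = (z − V)^{-1}) with eigenvalue β ≠ 0, and ξ = R_z ζ, then ξ ∈ D(V²) and V ξ = β (z² − V²) ξ. -/
open scoped InnerProductSpace

/-- Let `V` be a skew-adjoint operator on a complex Hilbert space, `z > 0`,
`R = (z − V)⁻¹`, `S = R* = (z + V)⁻¹`, and `Q_z = R* V R`. If `Q_z ζ = β ζ` with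
`β ≠ 0`, `ζ ≠ 0`, and `ξ = R ζ`, then `ξ ∈ D(V²)` and `V ξ = β (z² − V²) ξ`. -/
theorem stmt_7 {H : Type*} [NormedAddCommGroup H] [InnerProductSpace ℂ H] [CompleteSpace H]
    (V : H →ₗ.[ℂ] H)
    (hdense : Dense (V.domain : Set H))
    (hV : ∀ u v : V.domain, ⟪V u, (v : H)⟫_ℂ = -⟪(u : H), V v⟫_ℂ)
    (z : ℝ) (hz : 0 < z)
    (R S : H →L[ℂ] H)
    (hRmem : ∀ f, R f ∈ V.domain)
    (hR : ∀ f, (z : ℂ) • R f - V ⟨R f, hRmem f⟩ = f)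
    (hSmem : ∀ f, S f ∈ V.domain)
    (hS : ∀ f, (z : ℂ) • S f + V ⟨S f, hSmem f⟩ = f)
    (hadj : ∀ f g, ⟪S f, g⟫_ℂ = ⟪f, R g⟫_ℂ)
    (ζ : H) (hζ : ζ ≠ 0) (β : ℂ) (hβ : β ≠ 0)
    (hQ : S (V ⟨R ζ, hRmem ζ⟩) = β • ζ) :
    ∃ h2 : V ⟨R ζ, hRmem ζ⟩ ∈ V.domain,
      V ⟨R ζ, hRmem ζ⟩
        = β • ((z ^ 2 : ℂ) • R ζ - V ⟨V ⟨R ζ, hRmem ζ⟩, h2⟩) := by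
  set w := V ⟨R ζ, hRmem ζ⟩ with hwdef
  have hw : w = (z : ℂ) • R ζ - ζ := by
    have h1 := sub_eq_iff_eq_add.mp (hR ζ)
    rw [h1]; abel
  have hζeq : ζ = β⁻¹ • S w := by
    rw [hQ, smul_smul, inv_mul_cancel₀ hβ, one_smul]
  have hζdom : ζ ∈ V.domain := hζeq ▸ Submodule.smul_mem _ _ (hSmem w)
  have h2 : w ∈ V.domain :=
    hw ▸ Submodule.sub_mem _ (Submodule.smul_mem _ _ (hRmem ζ)) hζdom
  refine ⟨h2, ?_⟩
  -- compute V ζ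
  have hSwdom : (⟨S w, hSmem w⟩ : V.domain) = β • (⟨ζ, hζdom⟩ : V.domain) := by
    ext; simpa using hQ
  have hVζ : V ⟨ζ, hζdom⟩ = β⁻¹ • w - (z : ℂ) • ζ := by
    have h3 := hS w
    rw [hSwdom, V.map_smul] at h3
    rw [hQ] at h3
    -- h3 : z • (β • ζ) + β • V ⟨ζ, hζdom⟩ = w
    have : β • V ⟨ζ, hζdom⟩ = w - (z : ℂ) • (β • ζ) := by
      rw [← h3]; abel
    calc V ⟨ζ, hζdom⟩ = β⁻¹ • (β • V ⟨ζ, hζdom⟩) := by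
          rw [smul_smul, inv_mul_cancel₀ hβ, one_smul]
      _ = β⁻¹ • (w - (z : ℂ) • (β • ζ)) := by rw [this]
      _ = β⁻¹ • w - (z : ℂ) • ζ := by
          match_scalars <;> field_simp
  -- compute V w
  have hwd : (⟨w, h2⟩ : V.domain)
      = (z : ℂ) • (⟨R ζ, hRmem ζ⟩ : V.domain) - (⟨ζ, hζdom⟩ : V.domain) := by
    ext; simpa using hw
  have hVw : V ⟨w, h2⟩ = (z : ℂ) • w - (β⁻¹ • w - (z : ℂ) • ζ) := by
    rw [hwd, V.map_sub, V.map_smul, ← hwdef, hVζ]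
  rw [hVw]
  rw [hw]
  match_scalars <;> field_simp <;> ring
end

section
/- Let k : M × M → (0,∞) be a continuous strictly positive symmetric kernel on a compact metric space M with Borel probability measure μ. Define d(x) = ∫ k(x,y) dμ(y), q(y) = ∫ k(x,y)/d(x) dμ(x), k̂(x,y) = k(x,y)/(d(x) q(y)^{1/2}), and p(x,y) = ∫ k̂(x,z) k̂(z,y) dμ(z). Then p is symmetric, strictly positive, and Markovian: ∫ p(x,y) dμ(y) = 1 for every x. -/
open MeasureTheory

lemma cont_integrable' {X : Type*} [TopologicalSpace X] [CompactSpace X] [T2Space X]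
    [MeasurableSpace X] [OpensMeasurableSpace X] (ν : Measure X) [IsFiniteMeasure ν]
    (f : X → ℝ) (hf : Continuous f) : Integrable f ν :=
  hf.integrable_of_hasCompactSupport (HasCompactSupport.of_compactSpace f)

/-- Bistochastic kernel normalization: for a continuous, symmetric, strictly positive
kernel `k` on a compact metric space with fully supported Borel probability measure `μ`,
setting `d(x) = ∫ k(x,y) dμ(y)`, `q(y) = ∫ k(x,y)/d(x) dμ(x)`,
`k̂(x,y) = k(x,y)/(d(x)√(q(y)))`, and `p(x,y) = ∫ k̂(x,z) k̂(y,z) dμ(z)` (the kernel of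
`K̂ K̂*`), the kernel `p` is symmetric, strictly positive, and Markovian:
`∫ p(x,y) dμ(y) = 1` for every `x`. -/
theorem stmt_11 {M : Type*} [MetricSpace M] [CompactSpace M]
    [MeasurableSpace M] [BorelSpace M]
    (μ : Measure M) [IsProbabilityMeasure μ]
    (hsupp : ∀ U : Set M, IsOpen U → U.Nonempty → μ U ≠ 0)
    (k : M → M → ℝ) (hk : Continuous (Function.uncurry k))
    (hsym : ∀ x y, k x y = k y x) (hpos : ∀ x y, 0 < k x y) :
    let d : M → ℝ := fun x => ∫ y, k x y ∂μ
    let q : M → ℝ := fun y => ∫ x, k x y / d x ∂μ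
    let khat : M → M → ℝ := fun x y => k x y / (d x * Real.sqrt (q y))
    let p : M → M → ℝ := fun x y => ∫ z, khat x z * khat y z ∂μ
    (∀ x y, p x y = p y x) ∧ (∀ x y, 0 < p x y) ∧ (∀ x, ∫ y, p x y ∂μ = 1) := by
  intro d q khat p
  have hM : Nonempty M := by
    by_contra h
    rw [not_nonempty_iff] at h
    have h1 : μ Set.univ = 1 := measure_univ
    rw [Set.univ_eq_empty_iff.mpr h] at h1
    simp at h1
  -- lower and upper bounds for k
  obtain ⟨z0, -, hz0⟩ := isCompact_univ.exists_isMinOn (Set.univ_nonempty)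
    hk.continuousOn
  obtain ⟨z1, -, hz1⟩ := isCompact_univ.exists_isMaxOn (Set.univ_nonempty)
    hk.continuousOn
  set ε : ℝ := Function.uncurry k z0 with hεdef
  set C : ℝ := Function.uncurry k z1 with hCdef
  have hε : 0 < ε := hpos _ _
  have hklb : ∀ x y, ε ≤ k x y := fun x y => hz0 (Set.mem_univ (x, y))
  have hkub : ∀ x y, k x y ≤ C := fun x y => hz1 (Set.mem_univ (x, y))
  have hC : 0 < C := lt_of_lt_of_le hε (by simpa using hklb z1.1 z1.2 |>.trans (hkub _ _))
  have hεC : ε ≤ C := le_trans (hklb z1.1 z1.2) (by simpa using hkub z1.1 z1.2)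
  have intM : ∀ f : M → ℝ, Continuous f → Integrable f μ := fun f hf =>
    cont_integrable' μ f hf
  have hkx : ∀ x, Continuous (k x) := fun x => hk.comp (Continuous.prodMk_right x)
  have hky : ∀ y, Continuous (fun x => k x y) := fun y =>
    hk.comp (continuous_id.prodMk continuous_const)
  -- d
  have hd_lb : ∀ x, ε ≤ d x := by
    intro x
    have h1 : (ε : ℝ) = ∫ _ : M, ε ∂μ := by simp
    rw [h1]
    exact integral_mono (integrable_const ε) (intM _ (hkx x)) (fun y => hklb x y)
  have hd_ub : ∀ x, d x ≤ C := by
    intro x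
    have h1 : (C : ℝ) = ∫ _ : M, C ∂μ := by simp
    rw [h1]
    exact integral_mono (intM _ (hkx x)) (integrable_const C) (fun y => hkub x y)
  have hd_pos : ∀ x, 0 < d x := fun x => lt_of_lt_of_le hε (hd_lb x)
  have hd_ne : ∀ x, d x ≠ 0 := fun x => (hd_pos x).ne'
  have hdc : Continuous d := by
    apply continuous_of_dominated (bound := fun _ => C)
    · exact fun x => ((hkx x).aestronglyMeasurable)
    · intro x
      filter_upwards with y
      rw [Real.norm_eq_abs, abs_of_pos (hpos x y)]
      exact hkub x y
    · exact integrable_const C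
    · filter_upwards with y
      exact hky y
  -- q
  have hqint : ∀ y, Continuous (fun x => k x y / d x) := fun y =>
    (hky y).div hdc hd_ne
  have hq_lb : ∀ y, ε / C ≤ q y := by
    intro y
    have h1 : (ε / C : ℝ) = ∫ _ : M, ε / C ∂μ := by simp
    rw [h1]
    refine integral_mono (integrable_const _) (intM _ (hqint y)) (fun x => ?_)
    exact div_le_div₀ (le_of_lt (hpos x y)) (hklb x y) (hd_pos x) (hd_ub x)
  have hq_ub : ∀ y, q y ≤ C / ε := by
    intro y
    have h1 : (C / ε : ℝ) = ∫ _ : M, C / ε ∂μ := by simp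
    rw [h1]
    refine integral_mono (intM _ (hqint y)) (integrable_const _) (fun x => ?_)
    exact div_le_div₀ (le_of_lt hC) (hkub x y) hε (hd_lb x)
  have hq_pos : ∀ y, 0 < q y := fun y => lt_of_lt_of_le (div_pos hε hC) (hq_lb y)
  have hsq_pos : ∀ y, 0 < Real.sqrt (q y) := fun y => Real.sqrt_pos.mpr (hq_pos y)
  have hqc : Continuous q := by
    apply continuous_of_dominated (bound := fun _ => C / ε)
    · exact fun y => ((hqint y).aestronglyMeasurable)
    · intro y
      filter_upwards with x
      rw [Real.norm_eq_abs, abs_of_pos (div_pos (hpos x y) (hd_pos x))]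
      exact div_le_div₀ (le_of_lt hC) (hkub x y) hε (hd_lb x)
    · exact integrable_const _
    · filter_upwards with x
      exact (hkx x).div continuous_const (fun y => hd_ne x)
  -- khat
  have hden_pos : ∀ x y, 0 < d x * Real.sqrt (q y) :=
    fun x y => mul_pos (hd_pos x) (hsq_pos y)
  have hkhat_pos : ∀ x y, 0 < khat x y := fun x y => div_pos (hpos x y) (hden_pos x y)
  have hkhatc : Continuous (Function.uncurry khat) := by
    apply hk.div
    · exact (hdc.comp continuous_fst).mul
        (Real.continuous_sqrt.comp (hqc.comp continuous_snd))
    · exact fun z => (hden_pos z.1 z.2).ne'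
  have hkhatx : ∀ x, Continuous (khat x) := fun x =>
    hkhatc.comp (Continuous.prodMk_right x)
  have hkhaty : ∀ y, Continuous (fun x => khat x y) := fun y =>
    hkhatc.comp (continuous_id.prodMk continuous_const)
  set δ : ℝ := ε / (C * Real.sqrt (C / ε)) with hδdef
  have hδ : 0 < δ := div_pos hε (mul_pos hC (Real.sqrt_pos.mpr (div_pos hC hε)))
  have hkhat_lb : ∀ x y, δ ≤ khat x y := by
    intro x y
    refine div_le_div₀ (le_of_lt (hpos x y)) (hklb x y) (hden_pos x y) ?_
    exact mul_le_mul (hd_ub x) (Real.sqrt_le_sqrt (hq_ub y)) (le_of_lt (hsq_pos y))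
      (le_of_lt hC)
  refine ⟨?_, ?_, ?_⟩
  · -- symmetry
    intro x y
    show (∫ z, khat x z * khat y z ∂μ) = ∫ z, khat y z * khat x z ∂μ
    exact congrArg _ (funext fun z => mul_comm _ _)
  · -- positivity
    intro x y
    have h1 : δ * δ ≤ p x y := by
      have h2 : (δ * δ : ℝ) = ∫ _ : M, δ * δ ∂μ := by simp
      rw [h2]
      refine integral_mono (integrable_const _)
        (intM _ ((hkhatx x).mul (hkhatx y))) (fun z => ?_)
      exact mul_le_mul (hkhat_lb x z) (hkhat_lb y z) (le_of_lt hδ)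
        (le_of_lt (hkhat_pos x z))
    exact lt_of_lt_of_le (mul_pos hδ hδ) h1
  · -- Markov
    intro x
    have hswap : (∫ y, p x y ∂μ) = ∫ z, ∫ y, khat x z * khat y z ∂μ ∂μ := by
      show (∫ y, ∫ z, khat x z * khat y z ∂μ ∂μ) = _
      apply integral_integral_swap
      apply cont_integrable'
      exact ((hkhatx x).comp continuous_snd).mul hkhatc
    have hinner : ∀ z, (∫ y, khat y z ∂μ) = Real.sqrt (q z) := by
      intro z
      have h1 : (fun y => khat y z) = fun y => (k y z / d y) / Real.sqrt (q z) :=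
        funext fun y => by show k y z / (d y * Real.sqrt (q z)) = _; rw [div_div]
      rw [h1, integral_div]
      show q z / Real.sqrt (q z) = _
      exact Real.div_sqrt
    have hstep : ∀ z, (∫ y, khat x z * khat y z ∂μ) = k x z / d x := by
      intro z
      rw [integral_const_mul, hinner z]
      show k x z / (d x * Real.sqrt (q z)) * Real.sqrt (q z) = _
      rw [div_mul_eq_mul_div, mul_comm (d x), ← div_div, mul_div_assoc,
        div_self (hsq_pos z).ne', mul_one]
    rw [hswap]
    have h2 : (fun z => ∫ y, khat x z * khat y z ∂μ) = fun z => k x z / d x :=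
      funext hstep
    rw [h2, integral_div]
    show d x / d x = 1
    exact div_self (hd_ne x)
end
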